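/- arXiv:0903.1375 — 2 statements merged into one kernel-verified Lean document; each statement's English description precedes it below -/
import Mathlib

section
/- The graph of the family (hᵋ_τ)_{τ∈ℝ} is positively invariant for the slow-fast system: if (X(t),Y(t)), t ≥ 0, is a solution of X′ = AX + F(X,Y,t), Y′ = (1/ε)BY + (1/ε)G(X,Y,t) with Y(0) = hᵋ_0(X(0)), then Y(t) = hᵋ_t(X(t)) for all t ≥ 0. -/
/-!
Continue the solution into the past by the fixed point `w₀` at time `0`: this gives a continuous
trajectory `W` on `ℝ`. In unshifted time, `W (· + τ)` is a fixed point of `T_τ((W τ).1, ·)` iff on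
`(-∞, τ]` the slow component satisfies the variation-of-constants formula anchored at `τ` and the
fast component is `(1/ε) ∫_{-∞}^r e^{(r-σ)B/ε} G(W σ, σ) dσ`. Both properties pass from `τ = 0` to
`τ = t` along the solution: the slow one because Duhamel's formula can be re-anchored at any time,
the fast one because Duhamel's formula on `[0, r]` supplies exactly the part of the integral over
`(0, r]`. The fast integral over `(-∞, 0]` converges because `G` grows at most like `e^{λσ}` along
`w₀` (Lipschitz bound and the weight of `C⁻_λ`) while `e^{-σB/ε}` grows at most like `e^{βσ/ε}`,
and `β/ε < λ`.
-/

open MeasureTheory Set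

noncomputable section

/-- `ℝᵏ` with the Euclidean norm. -/
abbrev Euc (k : ℕ) := EuclideanSpace ℝ (Fin k)

/-- The operator exponential `exp (t • A)` of a linear operator (matrix) `A` on `ℝᵏ`. -/
def expOp {k : ℕ} (A : Euc k →L[ℝ] Euc k) (t : ℝ) : Euc k →L[ℝ] Euc k :=
  NormedSpace.exp (t • A)

/-- Membership in the space `C⁻_ρ`: continuity on `(-∞,0]` together with finiteness of the
weighted sup norm `sup_{t ≤ 0} e^{-ρ t} ‖u t‖`. -/
def memCm (ρ : ℝ) {E : Type*} [NormedAddCommGroup E] (u : ℝ → E) : Prop :=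
  ContinuousOn u (Set.Iic 0) ∧ ∃ C : ℝ, ∀ t ≤ (0:ℝ), Real.exp (-ρ * t) * ‖u t‖ ≤ C

/-- The weighted sup norm `‖u‖_ρ = sup_{t ≤ 0} e^{-ρ t} ‖u t‖` on `C⁻_ρ`. -/
def nrm (ρ : ℝ) {E : Type*} [NormedAddCommGroup E] (u : ℝ → E) : ℝ :=
  ⨆ t : Set.Iic (0:ℝ), Real.exp (-ρ * (t : ℝ)) * ‖u t‖

/-- The time-shifted Lyapunov–Perron map `T_τ(X₀, ·)`. -/
def LPshift {n m : ℕ} (A : Euc n →L[ℝ] Euc n) (B : Euc m →L[ℝ] Euc m)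
    (F : Euc n → Euc m → ℝ → Euc n) (G : Euc n → Euc m → ℝ → Euc m)
    (ε τ : ℝ) (X₀ : Euc n) (u : ℝ → Euc n × Euc m) (t : ℝ) : Euc n × Euc m :=
  (expOp A t X₀ + ∫ s in (0:ℝ)..t, expOp A (t - s) (F (u s).1 (u s).2 (s + τ)),
   (1 / ε) • ∫ s in Set.Iic t, expOp B ((t - s) / ε) (G (u s).1 (u s).2 (s + τ)))

section expOp

variable {k : ℕ} (M : Euc k →L[ℝ] Euc k)

lemma expOp_zero : expOp M 0 = 1 := by
  rw [expOp, show (0 : ℝ) • M = 0 from zero_smul ℝ M, NormedSpace.exp_zero]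

lemma expOp_add (s t : ℝ) : expOp M (s + t) = expOp M s * expOp M t := by
  let _ : NormedAlgebra ℚ (Euc k →L[ℝ] Euc k) := NormedAlgebra.restrictScalars ℚ ℝ _
  have hcomm : Commute (s • M) (t • M) := by
    ext x
    simp [smul_smul, mul_comm s t]
  simp only [expOp, show (s + t) • M = s • M + t • M from add_smul s t M]
  exact NormedSpace.exp_add_of_commute hcomm

lemma expOp_add_apply (s t : ℝ) (x : Euc k) :
    expOp M (s + t) x = expOp M s (expOp M t x) := by
  rw [expOp_add]; rfl

lemma continuous_expOp : Continuous (expOp M) := by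
  let _ : NormedAlgebra ℚ (Euc k →L[ℝ] Euc k) := NormedAlgebra.restrictScalars ℚ ℝ _
  exact NormedSpace.exp_continuous.comp (continuous_id.smul continuous_const)

lemma hasDerivAt_expOp (t : ℝ) : HasDerivAt (expOp M) (expOp M t * M) t :=
  hasDerivAt_exp_smul_const M t

lemma expOp_div (t c : ℝ) : expOp M (t / c) = expOp (c⁻¹ • M) t := by
  rw [expOp, expOp, smul_smul, div_eq_mul_inv]

lemma norm_expOp_inv_smul_le {β ε : ℝ} (hε : 0 < ε)
    (hM : ∀ t ≥ (0 : ℝ), ∀ x, ‖expOp M t x‖ ≤ Real.exp (β * t) * ‖x‖) :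
    ∀ t ≥ (0 : ℝ), ∀ x, ‖expOp (ε⁻¹ • M) t x‖ ≤ Real.exp (β / ε * t) * ‖x‖ := by
  intro t ht x
  rw [← expOp_div, div_mul_eq_mul_div, mul_div_assoc]
  exact hM _ (div_nonneg ht hε.le) x

end expOp

section Duhamel

variable {k : ℕ} (M : Euc k →L[ℝ] Euc k)

def SatisfiesDuhamel (f x : ℝ → Euc k) (a b : ℝ) : Prop :=
  x b = expOp M (b - a) (x a) + ∫ σ in a..b, expOp M (b - σ) (f σ)

variable {M}

theorem satisfiesDuhamel_of_hasDerivWithinAt {f x : ℝ → Euc k} {a b : ℝ} (hab : a ≤ b)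
    (hx : ∀ r ∈ Icc a b, HasDerivWithinAt x (M (x r) + f r) (Icc a b) r)
    (hf : ContinuousOn f (Icc a b)) :
    SatisfiesDuhamel M f x a b := by
  set φ : ℝ → Euc k := fun r => expOp M (b - r) (x r)
  have hS : Continuous fun r => expOp M (b - r) := (continuous_expOp M).comp (by fun_prop)
  have hφ : ∀ r ∈ Icc a b, HasDerivWithinAt φ (expOp M (b - r) (f r)) (Icc a b) r := by
    intro r hr
    have hS' : HasDerivAt (fun r => expOp M (b - r)) ((-1 : ℝ) • (expOp M (b - r) * M)) r :=
      (hasDerivAt_expOp M (b - r)).scomp r ((hasDerivAt_id r).const_sub b)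
    refine (hS'.hasDerivWithinAt.clm_apply (hx r hr)).congr_deriv ?_
    simp
  have hint : IntervalIntegrable (fun r => expOp M (b - r) (f r)) volume a b :=
    (ContinuousOn.clm_apply hS.continuousOn hf).intervalIntegrable_of_Icc hab
  have hFTC := intervalIntegral.integral_eq_sub_of_hasDeriv_right_of_le hab
    (fun r hr => (hφ r hr).continuousWithinAt)
    (fun r hr => (hφ r (Ioo_subset_Icc_self hr)).mono_of_mem_nhdsWithin
      (Icc_mem_nhdsGT_of_mem ⟨hr.1.le, hr.2⟩)) hint
  simp only [φ, sub_self, expOp_zero] at hFTC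
  rw [SatisfiesDuhamel, hFTC]
  simp

theorem SatisfiesDuhamel.reanchor {f x : ℝ → Euc k} (hf : Continuous f) {a b c : ℝ}
    (hb : SatisfiesDuhamel M f x a b) (hc : SatisfiesDuhamel M f x a c) :
    SatisfiesDuhamel M f x c b := by
  have hint : ∀ d e, IntervalIntegrable (fun σ => expOp M (d - σ) (f σ)) volume a e := fun d e =>
    (((continuous_expOp M).comp (by fun_prop)).clm_apply hf).intervalIntegrable _ _
  have hpush : expOp M (b - c) (x c)
      = expOp M (b - a) (x a) + ∫ σ in a..c, expOp M (b - σ) (f σ) := by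
    rw [hc, map_add, ← expOp_add_apply,
      ← ContinuousLinearMap.intervalIntegral_comp_comm _ (hint c c)]
    simp only [← expOp_add_apply, sub_add_sub_cancel]
  rw [SatisfiesDuhamel, hpush, hb,
    ← intervalIntegral.integral_interval_sub_left (hint b b) (hint b c)]
  abel

end Duhamel

section PastIntegral

variable {k : ℕ} {M : Euc k →L[ℝ] Euc k}

theorem eq_smul_integral_Iic_of_satisfiesDuhamel {g y : ℝ → Euc k} (hg : Continuous g)
    {a b c : ℝ} (hab : a ≤ b) (hint : IntegrableOn (fun σ => expOp M (a - σ) (g σ)) (Iic a))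
    (ha : y a = c • ∫ σ in Iic a, expOp M (a - σ) (g σ))
    (hb : SatisfiesDuhamel M (c • g) y a b) :
    y b = c • ∫ σ in Iic b, expOp M (b - σ) (g σ) := by
  have hpast : IntegrableOn (fun σ => expOp M (b - σ) (g σ)) (Iic a) := by
    refine IntegrableOn.congr_fun ((expOp M (b - a)).integrable_comp hint) (fun σ _ => ?_)
      measurableSet_Iic
    simp only [← expOp_add_apply, sub_add_sub_cancel]
  have hrecent : IntegrableOn (fun σ => expOp M (b - σ) (g σ)) (Ioc a b) :=
    ((((continuous_expOp M).comp (by fun_prop)).clm_apply hg).integrableOn_Icc).mono_set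
      Ioc_subset_Icc_self
  have hpush : expOp M (b - a) (y a) = c • ∫ σ in Iic a, expOp M (b - σ) (g σ) := by
    rw [ha, map_smul, ← ContinuousLinearMap.integral_comp_comm _ hint]
    simp only [← expOp_add_apply, sub_add_sub_cancel]
  rw [hb, hpush, ← Iic_union_Ioc_eq_Iic hab,
    setIntegral_union (Iic_disjoint_Ioc le_rfl) measurableSet_Ioc hpast hrecent,
    intervalIntegral.integral_of_le hab, smul_add]
  simp [integral_smul]

theorem integrableOn_Iic_expOp_of_norm_le {g : ℝ → Euc k} {a μ lam K : ℝ} (hμ : μ < lam)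
    (hM : ∀ t ≥ (0 : ℝ), ∀ x, ‖expOp M t x‖ ≤ Real.exp (μ * t) * ‖x‖)
    (hg : ContinuousOn g (Iic a)) (hgK : ∀ σ ≤ a, ‖g σ‖ ≤ K * Real.exp (lam * σ)) :
    IntegrableOn (fun σ => expOp M (a - σ) (g σ)) (Iic a) := by
  refine Integrable.mono' (((integrableOn_exp_mul_Iic (sub_pos.2 hμ) a).const_mul
    (K * Real.exp (μ * a)))) ?_ ?_
  · exact (((continuous_expOp M).comp (by fun_prop)).continuousOn.clm_apply hg).aestronglyMeasurable
      measurableSet_Iic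
  · filter_upwards [ae_restrict_mem measurableSet_Iic] with σ (hσ : σ ≤ a)
    calc ‖expOp M (a - σ) (g σ)‖ ≤ Real.exp (μ * (a - σ)) * (K * Real.exp (lam * σ)) :=
          (hM _ (sub_nonneg.2 hσ) _).trans
            (mul_le_mul_of_nonneg_left (hgK σ hσ) (Real.exp_pos _).le)
      _ = K * Real.exp (μ * a) * Real.exp ((lam - μ) * σ) := by
          rw [mul_left_comm, ← Real.exp_add, mul_assoc, ← Real.exp_add]; ring_nf

end PastIntegral

section LyapunovPerron

variable {n m : ℕ} (A : Euc n →L[ℝ] Euc n) (B : Euc m →L[ℝ] Euc m)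
  (F : Euc n → Euc m → ℝ → Euc n) (G : Euc n → Euc m → ℝ → Euc m) (ε : ℝ)

/-- The fixed-point identity of `LPshift` at time `T` written in unshifted time: `W` on
`(-∞, T]` corresponds to the fixed point `s ↦ W (s + T)` of `T_T((W T).1, ·)`. -/
def SolvesLPUpTo (W : ℝ → Euc n × Euc m) (T : ℝ) : Prop :=
  ∀ r ≤ T, SatisfiesDuhamel A (fun σ => F (W σ).1 (W σ).2 σ) (fun σ => (W σ).1) T r ∧
    (W r).2 = (1 / ε) • ∫ σ in Iic r, expOp (ε⁻¹ • B) (r - σ) (G (W σ).1 (W σ).2 σ)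

theorem LPshift_congr {τ s : ℝ} (x₀ : Euc n) {u v : ℝ → Euc n × Euc m} (hs : s ≤ 0)
    (huv : ∀ σ ≤ 0, u σ = v σ) :
    LPshift A B F G ε τ x₀ u s = LPshift A B F G ε τ x₀ v s := by
  have hslow : ∀ σ ∈ uIcc 0 s, u σ = v σ := fun σ hσ =>
    huv σ (by rw [uIcc_of_ge hs] at hσ; exact hσ.2)
  have hfast : ∀ σ ∈ Iic s, u σ = v σ := fun σ hσ => huv σ (le_trans hσ hs)
  simp only [LPshift]
  congr 2
  · exact intervalIntegral.integral_congr fun σ hσ => by simp only [hslow σ hσ]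
  · exact setIntegral_congr_fun measurableSet_Iic fun σ hσ => by simp only [hfast σ hσ]

theorem LPshift_comp_add_right (τ : ℝ) (x₀ : Euc n) (W : ℝ → Euc n × Euc m) (s : ℝ) :
    LPshift A B F G ε τ x₀ (fun σ => W (σ + τ)) s =
      (expOp A s x₀ + ∫ σ in τ..s + τ, expOp A (s + τ - σ) (F (W σ).1 (W σ).2 σ),
        (1 / ε) • ∫ σ in Iic (s + τ), expOp (ε⁻¹ • B) (s + τ - σ) (G (W σ).1 (W σ).2 σ)) := by
  have hslow := intervalIntegral.integral_comp_add_right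
    (fun σ => expOp A (s + τ - σ) (F (W σ).1 (W σ).2 σ)) (a := 0) (b := s) τ
  have hfast := (measurePreserving_add_right volume τ).setIntegral_preimage_emb
    (measurableEmbedding_addRight τ)
    (fun σ => expOp (ε⁻¹ • B) (s + τ - σ) (G (W σ).1 (W σ).2 σ)) (Iic (s + τ))
  simp only [zero_add, add_sub_add_right_eq_sub, preimage_add_const_Iic, add_sub_cancel_right]
    at hslow hfast
  simp only [LPshift, expOp_div, hslow, hfast]

theorem fixedPoint_comp_add_right_iff (τ : ℝ) (W : ℝ → Euc n × Euc m) :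
    (∀ s ≤ 0, W (s + τ) = LPshift A B F G ε τ (W τ).1 (fun σ => W (σ + τ)) s) ↔
      SolvesLPUpTo A B F G ε W τ := by
  simp only [LPshift_comp_add_right, SolvesLPUpTo, SatisfiesDuhamel, Prod.ext_iff]
  constructor
  · intro h r hr
    simpa using h (r - τ) (by linarith)
  · intro h s hs
    simpa using h (s + τ) (by linarith)

end LyapunovPerron

section Propagation

variable {n m : ℕ} {A : Euc n →L[ℝ] Euc n} {B : Euc m →L[ℝ] Euc m}
  {F : Euc n → Euc m → ℝ → Euc n} {G : Euc n → Euc m → ℝ → Euc m} {ε : ℝ}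

theorem SolvesLPUpTo.of_hasDerivWithinAt {W : ℝ → Euc n × Euc m} {X : ℝ → Euc n}
    {Y : ℝ → Euc m} (h0 : SolvesLPUpTo A B F G ε W 0) (hW : Continuous W)
    (hFc : Continuous fun p : Euc n × Euc m × ℝ => F p.1 p.2.1 p.2.2)
    (hGc : Continuous fun p : Euc n × Euc m × ℝ => G p.1 p.2.1 p.2.2)
    (hint : IntegrableOn (fun σ => expOp (ε⁻¹ • B) (0 - σ) (G (W σ).1 (W σ).2 σ)) (Iic 0))
    (hX : ∀ t ≥ (0:ℝ), HasDerivWithinAt X (A (X t) + F (X t) (Y t) t) (Ici 0) t)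
    (hY : ∀ t ≥ (0:ℝ), HasDerivWithinAt Y
      ((1 / ε) • B (Y t) + (1 / ε) • G (X t) (Y t) t) (Ici 0) t)
    (hWXY : ∀ r ≥ 0, W r = (X r, Y r)) {t : ℝ} (ht : 0 ≤ t) :
    SolvesLPUpTo A B F G ε W t := by
  have hf : Continuous fun σ => F (W σ).1 (W σ).2 σ :=
    hFc.comp (hW.fst.prodMk (hW.snd.prodMk continuous_id))
  have hg : Continuous fun σ => G (W σ).1 (W σ).2 σ :=
    hGc.comp (hW.fst.prodMk (hW.snd.prodMk continuous_id))
  have hslow : ∀ r ≥ 0,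
      SatisfiesDuhamel A (fun σ => F (W σ).1 (W σ).2 σ) (fun σ => (W σ).1) 0 r := fun r hr =>
    satisfiesDuhamel_of_hasDerivWithinAt hr (fun σ hσ => by
      simpa only [hWXY σ hσ.1] using
        ((hX σ hσ.1).mono Icc_subset_Ici_self).congr_of_mem (f₁ := fun σ => (W σ).1)
          (fun τ hτ => by rw [hWXY τ hτ.1]) hσ) hf.continuousOn
  have hfast : ∀ r ≥ 0, SatisfiesDuhamel (ε⁻¹ • B)
      ((1 / ε) • fun σ => G (W σ).1 (W σ).2 σ) (fun σ => (W σ).2) 0 r := fun r hr =>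
    satisfiesDuhamel_of_hasDerivWithinAt hr (fun σ hσ => by
      simpa only [one_div, smul_apply, Pi.smul_apply, hWXY σ hσ.1] using
        ((hY σ hσ.1).mono Icc_subset_Ici_self).congr_of_mem (f₁ := fun σ => (W σ).2)
          (fun τ hτ => by rw [hWXY τ hτ.1]) hσ) (hg.const_smul _).continuousOn
  intro r hr
  rcases le_total r 0 with hr0 | hr0
  · exact ⟨(h0 r hr0).1.reanchor hf (hslow t ht), (h0 r hr0).2⟩
  · exact ⟨(hslow r hr0).reanchor hf (hslow t ht),
      eq_smul_integral_Iic_of_satisfiesDuhamel hg hr0 hint (h0 0 le_rfl).2 (hfast r hr0)⟩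

end Propagation

theorem exists_continuous_of_continuousOn_Iic_Ici {E : Type*} [TopologicalSpace E]
    {u v : ℝ → E} (hu : ContinuousOn u (Iic 0)) (hv : ContinuousOn v (Ici 0)) (h : u 0 = v 0) :
    ∃ W : ℝ → E, Continuous W ∧ (∀ r ≤ 0, W r = u r) ∧ ∀ r ≥ 0, W r = v r := by
  refine ⟨fun r => if r ≤ 0 then u r else v r,
    continuous_if_le continuous_id continuous_const hu hv fun r hr => by rw [hr, h],
    fun r hr => if_pos hr, fun r hr => ?_⟩
  rcases hr.eq_or_lt with rfl | hr
  · exact (if_pos le_rfl).trans h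
  · exact if_neg hr.not_ge

section WeightedBounds

variable {E : Type*} [NormedAddCommGroup E] {ρ : ℝ}

theorem le_mul_exp_of_exp_neg_mul_le {a C σ : ℝ} (h : Real.exp (-ρ * σ) * a ≤ C) :
    a ≤ C * Real.exp (ρ * σ) := by
  rwa [neg_mul, Real.exp_neg, inv_mul_le_iff₀ (Real.exp_pos _), mul_comm] at h

theorem memCm.congr {u v : ℝ → E} (hu : memCm ρ u) (huv : ∀ σ ≤ 0, u σ = v σ) : memCm ρ v := by
  obtain ⟨hc, C, hC⟩ := hu
  exact ⟨hc.congr fun σ hσ => (huv σ hσ).symm, C, fun σ hσ => huv σ hσ ▸ hC σ hσ⟩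

theorem memCm.comp_add_right {W : ℝ → E} (hW : memCm ρ W) (hWc : Continuous W) (t : ℝ) :
    memCm ρ fun s => W (s + t) := by
  obtain ⟨-, C, hC⟩ := hW
  obtain ⟨D, hD⟩ := isCompact_Icc.exists_bound_of_continuousOn (s := Icc (-t) 0)
    (f := fun s => Real.exp (-ρ * s) * ‖W (s + t)‖) (by fun_prop)
  refine ⟨(hWc.comp (continuous_add_const t)).continuousOn,
    max D (Real.exp (ρ * t) * C), fun s hs => ?_⟩
  rcases le_total s (-t) with hst | hst
  · calc Real.exp (-ρ * s) * ‖W (s + t)‖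
        = Real.exp (ρ * t) * (Real.exp (-ρ * (s + t)) * ‖W (s + t)‖) := by
          rw [← mul_assoc, ← Real.exp_add]; ring_nf
      _ ≤ Real.exp (ρ * t) * C :=
          mul_le_mul_of_nonneg_left (hC _ (by linarith)) (Real.exp_pos _).le
      _ ≤ _ := le_max_right _ _
  · exact ((Real.norm_of_nonneg (by positivity)).symm.le.trans (hD s ⟨hst, hs⟩)).trans
      (le_max_left _ _)

theorem exists_norm_comp_le_mul_exp {E' : Type*} [NormedAddCommGroup E'] {g : E → ℝ → E'}
    {K : NNReal} (hg : ∀ σ, LipschitzWith K (g · σ)) {u : ℝ → E} (hu : memCm ρ u)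
    {C₀ : ℝ} (hg0 : ∀ σ ≤ (0 : ℝ), Real.exp (-ρ * σ) * ‖g 0 σ‖ ≤ C₀) :
    ∃ C, ∀ σ ≤ (0 : ℝ), ‖g (u σ) σ‖ ≤ C * Real.exp (ρ * σ) := by
  obtain ⟨-, C, hC⟩ := hu
  refine ⟨K * C + C₀, fun σ hσ => ?_⟩
  calc ‖g (u σ) σ‖ ≤ ‖g 0 σ‖ + K * ‖u σ - 0‖ :=
        (norm_le_norm_add_norm_sub' _ _).trans (by gcongr; exact (hg σ).norm_sub_le _ _)
    _ ≤ C₀ * Real.exp (ρ * σ) + K * (C * Real.exp (ρ * σ)) := by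
        rw [sub_zero]
        gcongr
        exacts [le_mul_exp_of_exp_neg_mul_le (hg0 σ hσ), le_mul_exp_of_exp_neg_mul_le (hC σ hσ)]
    _ = (K * C + C₀) * Real.exp (ρ * σ) := by ring

end WeightedBounds

theorem graph_positively_invariant_general
    {n m : ℕ} (A : Euc n →L[ℝ] Euc n) (B : Euc m →L[ℝ] Euc m)
    (β : ℝ)
    (hB : ∀ t ≥ (0:ℝ), ∀ y : Euc m, ‖expOp B t y‖ ≤ Real.exp (β * t) * ‖y‖)
    (F : Euc n → Euc m → ℝ → Euc n) (G : Euc n → Euc m → ℝ → Euc m)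
    (Lg : NNReal)
    (hFc : Continuous fun p : Euc n × Euc m × ℝ => F p.1 p.2.1 p.2.2)
    (hGc : Continuous fun p : Euc n × Euc m × ℝ => G p.1 p.2.1 p.2.2)
    (hGl : ∀ t : ℝ, LipschitzWith Lg fun p : Euc n × Euc m => G p.1 p.2 t)
    (ε lam : ℝ) (hε : 0 < ε)
    (hlam1 : β < ε * lam)
    (hFG0 : ∀ τ : ℝ, ∃ C : ℝ, ∀ t ≤ (0:ℝ),
      Real.exp (-lam * t) * (‖F 0 0 (t + τ)‖ + ‖G 0 0 (t + τ)‖) ≤ C)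
    (X : ℝ → Euc n) (Y : ℝ → Euc m)
    (hX : ∀ t ≥ (0:ℝ), HasDerivWithinAt X (A (X t) + F (X t) (Y t) t) (Set.Ici 0) t)
    (hY : ∀ t ≥ (0:ℝ), HasDerivWithinAt Y
      ((1 / ε) • B (Y t) + (1 / ε) • G (X t) (Y t) t) (Set.Ici 0) t)
    (h0 : ∃ w : ℝ → Euc n × Euc m,
      (memCm lam w ∧ ∀ s ≤ (0:ℝ), w s = LPshift A B F G ε 0 (X 0) w s) ∧
        Y 0 = (w 0).2) :
    ∀ t ≥ (0:ℝ), ∃ w : ℝ → Euc n × Euc m,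
      (memCm lam w ∧ ∀ s ≤ (0:ℝ), w s = LPshift A B F G ε t (X t) w s) ∧
        Y t = (w 0).2 := by
  intro t ht
  obtain ⟨w₀, ⟨hw₀, hw₀fix⟩, hY0⟩ := h0
  have hw₀0 : w₀ 0 = (X 0, Y 0) := Prod.ext
    (by simpa [LPshift, expOp_zero] using congrArg Prod.fst (hw₀fix 0 le_rfl)) hY0.symm
  obtain ⟨W, hWc, hW_neg, hW_pos⟩ := exists_continuous_of_continuousOn_Iic_Ici hw₀.1
    (fun r hr => (hX r hr).continuousWithinAt.prodMk (hY r hr).continuousWithinAt) hw₀0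
  have hW0 : SolvesLPUpTo A B F G ε W 0 := by
    refine (fixedPoint_comp_add_right_iff A B F G ε 0 W).1 fun s hs => ?_
    rw [add_zero, hW_neg s hs, hw₀fix s hs, hW_pos 0 le_rfl]
    exact LPshift_congr A B F G ε _ hs fun σ hσ => by rw [add_zero, hW_neg σ hσ]
  obtain ⟨C₁, hC₁⟩ := hFG0 0
  obtain ⟨K, hK⟩ := exists_norm_comp_le_mul_exp (g := fun (p : Euc n × Euc m) σ => G p.1 p.2 σ)
    hGl hw₀ fun σ hσ => (mul_le_mul_of_nonneg_left
      (by rw [add_zero]; exact le_add_of_nonneg_left (norm_nonneg _)) (Real.exp_pos _).le).trans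
      (hC₁ σ hσ)
  have hint := integrableOn_Iic_expOp_of_norm_le (by rwa [div_lt_iff₀' hε])
    (norm_expOp_inv_smul_le B hε hB)
    (hGc.comp (hWc.fst.prodMk (hWc.snd.prodMk continuous_id))).continuousOn
    fun σ hσ => hW_neg σ hσ ▸ hK σ hσ
  have hWt := hW0.of_hasDerivWithinAt hWc hFc hGc hint hX hY hW_pos ht
  refine ⟨fun s => W (s + t), ⟨(hw₀.congr fun σ hσ => (hW_neg σ hσ).symm).comp_add_right hWc t,
    fun s hs => ?_⟩, by simp [hW_pos t ht]⟩
  simpa [hW_pos t ht] using (fixedPoint_comp_add_right_iff A B F G ε t W).2 hWt s hs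

/-- Positive invariance of the graph of the family `(hᵋ_τ)`: a solution of the
slow-fast system starting on the graph at time `0` stays on the graph for all `t ≥ 0`.  Here
`hᵋ_τ(X₀)` is the value `Y*_τ(0)` of the second component of the fixed point of `T_τ(X₀,·)`. -/
theorem graph_positively_invariant
    {n m : ℕ} (A : Euc n →L[ℝ] Euc n) (B : Euc m →L[ℝ] Euc m)
    (α β : ℝ) (hα : 0 ≤ α) (hβ : β < 0)
    (hA : ∀ t ≤ (0:ℝ), ∀ x : Euc n, ‖expOp A t x‖ ≤ Real.exp (α * t) * ‖x‖)
    (hB : ∀ t ≥ (0:ℝ), ∀ y : Euc m, ‖expOp B t y‖ ≤ Real.exp (β * t) * ‖y‖)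
    (F : Euc n → Euc m → ℝ → Euc n) (G : Euc n → Euc m → ℝ → Euc m)
    (Lf Lg : NNReal)
    (hFc : Continuous fun p : Euc n × Euc m × ℝ => F p.1 p.2.1 p.2.2)
    (hGc : Continuous fun p : Euc n × Euc m × ℝ => G p.1 p.2.1 p.2.2)
    (hFl : ∀ t : ℝ, LipschitzWith Lf fun p : Euc n × Euc m => F p.1 p.2 t)
    (hGl : ∀ t : ℝ, LipschitzWith Lg fun p : Euc n × Euc m => G p.1 p.2 t)
    (ε lam : ℝ) (hε : 0 < ε) (hε1 : ε ≤ 1)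
    (hlam1 : β < ε * lam) (hlam2 : ε * lam < α)
    (hgap : (Lf : ℝ) / (α - lam) + (Lg : ℝ) / (ε * lam - β) < 1)
    (hFG0 : ∀ τ : ℝ, ∃ C : ℝ, ∀ t ≤ (0:ℝ),
      Real.exp (-lam * t) * (‖F 0 0 (t + τ)‖ + ‖G 0 0 (t + τ)‖) ≤ C)
    (X : ℝ → Euc n) (Y : ℝ → Euc m)
    (hX : ∀ t ≥ (0:ℝ), HasDerivWithinAt X (A (X t) + F (X t) (Y t) t) (Set.Ici 0) t)
    (hY : ∀ t ≥ (0:ℝ), HasDerivWithinAt Y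
      ((1 / ε) • B (Y t) + (1 / ε) • G (X t) (Y t) t) (Set.Ici 0) t)
    (h0 : ∃ w : ℝ → Euc n × Euc m,
      (memCm lam w ∧ ∀ s ≤ (0:ℝ), w s = LPshift A B F G ε 0 (X 0) w s) ∧
        Y 0 = (w 0).2) :
    ∀ t ≥ (0:ℝ), ∃ w : ℝ → Euc n × Euc m,
      (memCm lam w ∧ ∀ s ≤ (0:ℝ), w s = LPshift A B F G ε t (X t) w s) ∧
        Y t = (w 0).2 :=
  graph_positively_invariant_general A B β hB F G Lg hFc hGc hGl ε lam hε hlam1 hFG0 X Y hX hY h0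
end
end

section
/- Suppose β + L_g < 0, fix X ∈ ℝⁿ, and assume sup_{t≤0} ‖G(X,0,t)‖ < ∞. Then there exists a unique bounded continuous function Ȳ : (−∞,0] → ℝᵐ satisfying Ȳ(t) = ∫_{−∞}^t exp((t−s)B) G(X,Ȳ(s),s) ds for all t ≤ 0; moreover Ȳ is continuously differentiable and solves Ȳ′(t) = B Ȳ(t) + G(X,Ȳ(t),t) for all t ≤ 0. (Its value h⁰(X) := Ȳ(0) defines the frozen-slow-variable graph map.) -/
/-!
The bounded continuous solutions on `(-∞, 0]` are the fixed points of the Lyapunov–Perron map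
`u ↦ (t ↦ ∫_{-∞}^t e^{(t-s)B} G(X, u(s), s) ds)` on the Banach space of bounded continuous
functions on `(-∞, 0]`. As `∫_{-∞}^t e^{β(t-s)} ds = 1/(-β)`, this map is Lipschitz with constant
`L_g/(-β) < 1`, and the contraction principle gives existence and uniqueness. Writing the integral
as `e^{tB} ∫_{-∞}^t e^{-sB} G(X, Ȳ(s), s) ds`, the product rule and the fundamental theorem of
calculus give `Ȳ' = BȲ + G(X, Ȳ, t)`.
-/

open MeasureTheory Set

noncomputable section

open scoped NNReal BoundedContinuousFunction

theorem integrableOn_exp_mul_sub_Iic {β : ℝ} (hβ : β < 0) (t : ℝ) :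
    IntegrableOn (fun s => Real.exp (β * (t - s))) (Iic t) := by
  simp_rw [mul_sub, Real.exp_sub, div_eq_mul_inv, ← Real.exp_neg, ← neg_mul]
  exact (integrableOn_exp_mul_Iic (neg_pos.2 hβ) t).const_mul _

theorem integral_exp_mul_sub_Iic {β : ℝ} (hβ : β < 0) (t : ℝ) :
    ∫ s in Iic t, Real.exp (β * (t - s)) = (-β)⁻¹ := by
  simp_rw [mul_sub, Real.exp_sub, div_eq_mul_inv, ← Real.exp_neg, ← neg_mul]
  rw [integral_const_mul, integral_exp_mul_Iic (neg_pos.2 hβ), neg_mul, Real.exp_neg,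
    mul_div_assoc', mul_inv_cancel₀ (Real.exp_ne_zero _), one_div]

theorem hasDerivWithinAt_setIntegral_Iic {E : Type*} [NormedAddCommGroup E] [NormedSpace ℝ E]
    [CompleteSpace E] {h : ℝ → E} {a t : ℝ} (hh : Continuous h) (hi : IntegrableOn h (Iic a))
    (ht : t ≤ a) :
    HasDerivWithinAt (fun r => ∫ s in Iic r, h s) (h t) (Iic a) t := by
  have hsplit : ∀ r ∈ Iic a, ∫ s in Iic r, h s = (∫ s in Iic t, h s) + ∫ s in t..r, h s :=
    fun r hr => by
      rw [← intervalIntegral.integral_Iic_sub_Iic (hi.mono_set (Iic_subset_Iic.2 ht))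
        (hi.mono_set (Iic_subset_Iic.2 hr)), add_sub_cancel]
  exact (((hh.integral_hasStrictDerivAt t t).hasDerivAt).const_add _).hasDerivWithinAt.congr
    hsplit (hsplit t ht)

section Perron

open NormedSpace

variable {E : Type*} [NormedAddCommGroup E] [NormedSpace ℝ E]

theorem exp_add_smul [CompleteSpace E] (A : E →L[ℝ] E) (t s : ℝ) :
    exp ((t + s) • A) = exp (t • A) * exp (s • A) := by
  have hr := expSeries_radius_eq_top ℝ (E →L[ℝ] E)
  rw [add_smul]
  exact exp_add_of_commute_of_mem_ball (((Commute.refl A).smul_left t).smul_right s)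
    (hr ▸ edist_lt_top _ _) (hr ▸ edist_lt_top _ _)

def HasExpDecay (A : E →L[ℝ] E) (β : ℝ) : Prop :=
  ∀ t ≥ (0:ℝ), ∀ y : E, ‖exp (t • A) y‖ ≤ Real.exp (β * t) * ‖y‖

def perronIntegral (A : E →L[ℝ] E) (f : ℝ → E) (t : ℝ) : E :=
  ∫ s in Iic t, exp ((t - s) • A) (f s)

variable {A : E →L[ℝ] E} {β : ℝ} {f f' : ℝ → E} {t M M' : ℝ}

theorem perronIntegral_congr (h : EqOn f f' (Iic t)) :
    perronIntegral A f t = perronIntegral A f' t :=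
  setIntegral_congr_fun measurableSet_Iic fun s hs => by rw [h hs]

theorem HasExpDecay.ae_norm_perronIntegrand_le (hA : HasExpDecay A β)
    (hM : ∀ s ≤ t, ‖f s‖ ≤ M) :
    ∀ᵐ s ∂volume.restrict (Iic t), ‖exp ((t - s) • A) (f s)‖ ≤ M * Real.exp (β * (t - s)) := by
  refine (ae_restrict_iff' measurableSet_Iic).2 (ae_of_all _ fun s (hs : s ≤ t) => ?_)
  calc ‖exp ((t - s) • A) (f s)‖ ≤ Real.exp (β * (t - s)) * ‖f s‖ := hA _ (sub_nonneg.2 hs) _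
    _ ≤ Real.exp (β * (t - s)) * M := by gcongr; exact hM s hs
    _ = M * Real.exp (β * (t - s)) := mul_comm _ _

theorem HasExpDecay.norm_perronIntegral_le (hA : HasExpDecay A β) (hβ : β < 0)
    (hM : ∀ s ≤ t, ‖f s‖ ≤ M) : ‖perronIntegral A f t‖ ≤ M / -β := by
  calc ‖perronIntegral A f t‖ ≤ ∫ s in Iic t, M * Real.exp (β * (t - s)) :=
        norm_integral_le_of_norm_le ((integrableOn_exp_mul_sub_Iic hβ t).const_mul M)
          (hA.ae_norm_perronIntegrand_le hM)
    _ = M / -β := by rw [integral_const_mul, integral_exp_mul_sub_Iic hβ, div_eq_mul_inv]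

variable [CompleteSpace E]

theorem HasExpDecay.integrableOn_perronIntegrand (hA : HasExpDecay A β) (hβ : β < 0)
    (hf : Continuous f) (hM : ∀ s ≤ t, ‖f s‖ ≤ M) :
    IntegrableOn (fun s => exp ((t - s) • A) (f s)) (Iic t) :=
  ((integrableOn_exp_mul_sub_Iic hβ t).const_mul M).mono'
    (((differentiable_exp_smul_const ℝ A).continuous.comp
      (continuous_const.sub continuous_id)).clm_apply hf).aestronglyMeasurable
    (hA.ae_norm_perronIntegrand_le hM)

theorem HasExpDecay.perronIntegral_sub (hA : HasExpDecay A β) (hβ : β < 0) (hf : Continuous f)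
    (hf' : Continuous f') (hM : ∀ s ≤ t, ‖f s‖ ≤ M) (hM' : ∀ s ≤ t, ‖f' s‖ ≤ M') :
    perronIntegral A f t - perronIntegral A f' t = perronIntegral A (f - f') t := by
  simp only [perronIntegral, Pi.sub_apply, map_sub]
  exact (integral_sub (hA.integrableOn_perronIntegrand hβ hf hM)
    (hA.integrableOn_perronIntegrand hβ hf' hM')).symm

theorem HasExpDecay.perronIntegral_eq_exp_smul_apply (hA : HasExpDecay A β) (hβ : β < 0)
    (hf : Continuous f) (hM : ∀ s ≤ 0, ‖f s‖ ≤ M) (ht : t ≤ 0) :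
    perronIntegral A f t = exp (t • A) (∫ s in Iic t, exp ((-s) • A) (f s)) := by
  have hi : IntegrableOn (fun s => exp ((0 - s) • A) (f s)) (Iic t) :=
    (hA.integrableOn_perronIntegrand hβ hf hM).mono_set (Iic_subset_Iic.2 ht)
  simp only [zero_sub] at hi
  rw [← ContinuousLinearMap.integral_comp_comm _ hi]
  refine setIntegral_congr_fun measurableSet_Iic fun s _ => ?_
  rw [sub_eq_add_neg, exp_add_smul, mul_apply_eq_comp]

theorem HasExpDecay.hasDerivWithinAt_perronIntegral (hA : HasExpDecay A β) (hβ : β < 0)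
    (hf : Continuous f) (hM : ∀ s ≤ 0, ‖f s‖ ≤ M) (ht : t ≤ 0) :
    HasDerivWithinAt (perronIntegral A f) (A (perronIntegral A f t) + f t) (Iic 0) t := by
  set h : ℝ → E := fun s => exp ((-s) • A) (f s)
  have hh : Continuous h :=
    ((differentiable_exp_smul_const ℝ A).continuous.comp continuous_neg).clm_apply hf
  have hi : IntegrableOn h (Iic 0) := by
    simpa only [zero_sub] using hA.integrableOn_perronIntegrand hβ hf hM
  have hprod := ((hasDerivAt_exp_smul_const' A t).hasDerivWithinAt (s := Iic 0)).clm_apply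
    (hasDerivWithinAt_setIntegral_Iic hh hi ht)
  have hinv : exp (t • A) (h t) = f t := by
    rw [← mul_apply_eq_comp, ← exp_add_smul, add_neg_cancel, zero_smul, exp_zero, one_apply_eq_self]
  rw [hinv, mul_apply_eq_comp, ← hA.perronIntegral_eq_exp_smul_apply hβ hf hM ht] at hprod
  exact hprod.congr (fun r hr => hA.perronIntegral_eq_exp_smul_apply hβ hf hM hr)
    (hA.perronIntegral_eq_exp_smul_apply hβ hf hM ht)

end Perron

theorem LipschitzWith.norm_le_mul_norm_add {E F : Type*} [SeminormedAddCommGroup E]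
    [SeminormedAddCommGroup F] {f : E → F} {K : ℝ≥0} (hf : LipschitzWith K f) (x : E) :
    ‖f x‖ ≤ K * ‖x‖ + ‖f 0‖ :=
  calc ‖f x‖ ≤ ‖f 0‖ + ‖f x - f 0‖ := norm_le_norm_add_norm_sub' _ _
    _ ≤ ‖f 0‖ + K * ‖x - 0‖ := by gcongr; exact hf.norm_sub_le x 0
    _ = K * ‖x‖ + ‖f 0‖ := by rw [sub_zero, add_comm]

protected theorem Continuous.IicExtend {α β : Type*} [LinearOrder α] [TopologicalSpace α]
    [OrderTopology α] [TopologicalSpace β] {b : α} {f : Iic b → β} (hf : Continuous f) :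
    Continuous (IicExtend f) :=
  hf.comp ((continuous_const.min continuous_id).subtype_mk _)

theorem ContinuousOn.exists_boundedContinuousFunction_eqOn {E : Type*} [SeminormedAddCommGroup E]
    {z : ℝ → E} {a K : ℝ} (hz : ContinuousOn z (Iic a)) (hK : ∀ t ≤ a, ‖z t‖ ≤ K) :
    ∃ u : Iic a →ᵇ E, EqOn (IicExtend u) z (Iic a) :=
  ⟨.ofNormedAddCommGroup _ (continuousOn_iff_continuous_domRestrict.1 hz) K fun τ => hK τ τ.2,
    fun _ ht => IicExtend_of_mem _ ht⟩

section FixedPoint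

open Function

variable {E : Type*} [NormedAddCommGroup E] {g : E → ℝ → E} {L : ℝ≥0} {C : ℝ}

theorem norm_apply_IicExtend_le (hgL : ∀ s, LipschitzWith L (g · s)) (hC : ∀ s ≤ 0, ‖g 0 s‖ ≤ C)
    (u : Iic (0:ℝ) →ᵇ E) {s : ℝ} (hs : s ≤ 0) : ‖g (IicExtend u s) s‖ ≤ L * ‖u‖ + C :=
  calc ‖g (IicExtend u s) s‖ ≤ L * ‖IicExtend u s‖ + ‖g 0 s‖ := (hgL s).norm_le_mul_norm_add _
    _ ≤ L * ‖u‖ + C := by gcongr; exacts [u.norm_coe_le_norm _, hC s hs]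

theorem continuous_apply_IicExtend (hg : Continuous (uncurry g)) (u : Iic (0:ℝ) →ᵇ E) :
    Continuous fun s => g (IicExtend u s) s :=
  hg.comp (u.continuous.IicExtend.prodMk continuous_id)

variable [NormedSpace ℝ E] [CompleteSpace E] {A : E →L[ℝ] E} {β : ℝ}

def perronMap (hA : HasExpDecay A β) (hβ : β < 0) (hg : Continuous (uncurry g))
    (hgL : ∀ s, LipschitzWith L (g · s)) (hC : ∀ s ≤ 0, ‖g 0 s‖ ≤ C) (u : Iic (0:ℝ) →ᵇ E) :
    Iic (0:ℝ) →ᵇ E :=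
  .ofNormedAddCommGroup (fun τ => perronIntegral A (fun s => g (IicExtend u s) s) τ)
    (continuousOn_iff_continuous_domRestrict.1 fun _ ht =>
      (hA.hasDerivWithinAt_perronIntegral hβ (continuous_apply_IicExtend hg u)
        (fun _ => norm_apply_IicExtend_le hgL hC u) ht).continuousWithinAt)
    ((L * ‖u‖ + C) / -β)
    fun τ => hA.norm_perronIntegral_le hβ fun _ hs =>
      norm_apply_IicExtend_le hgL hC u (hs.trans τ.2)

variable (hA : HasExpDecay A β) (hβ : β < 0) (hg : Continuous (uncurry g))
  (hgL : ∀ s, LipschitzWith L (g · s)) (hC : ∀ s ≤ 0, ‖g 0 s‖ ≤ C)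

theorem isFixedPt_perronMap_iff (u : Iic (0:ℝ) →ᵇ E) :
    IsFixedPt (perronMap hA hβ hg hgL hC) u ↔
      ∀ t ≤ (0:ℝ), IicExtend u t = perronIntegral A (fun s => g (IicExtend u s) s) t :=
  ⟨fun h t ht => (IicExtend_of_mem u ht).trans (DFunLike.congr_fun h ⟨t, ht⟩).symm,
    fun h => BoundedContinuousFunction.ext fun ⟨t, ht⟩ =>
      (h t ht).symm.trans (IicExtend_of_mem u ht)⟩

theorem lipschitzWith_perronMap :
    LipschitzWith (Real.toNNReal (L / -β)) (perronMap hA hβ hg hgL hC) := by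
  refine LipschitzWith.of_dist_le_mul fun u v => ?_
  have hβ' : 0 < -β := neg_pos.2 hβ
  rw [Real.coe_toNNReal _ (by positivity), BoundedContinuousFunction.dist_le (by positivity)]
  intro τ
  set fu : ℝ → E := fun s => g (IicExtend u s) s
  set fv : ℝ → E := fun s => g (IicExtend v s) s
  have hdiff : ∀ s, ‖(fu - fv) s‖ ≤ L * dist u v := fun s =>
    ((hgL s).norm_sub_le _ _).trans (by
      gcongr; rw [← dist_eq_norm]; exact BoundedContinuousFunction.dist_coe_le_dist _)
  rw [dist_eq_norm]
  calc ‖perronIntegral A fu τ - perronIntegral A fv τ‖ = ‖perronIntegral A (fu - fv) τ‖ := by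
        rw [hA.perronIntegral_sub hβ (continuous_apply_IicExtend hg u)
          (continuous_apply_IicExtend hg v)
          (fun _ hs => norm_apply_IicExtend_le hgL hC u (hs.trans τ.2))
          (fun _ hs => norm_apply_IicExtend_le hgL hC v (hs.trans τ.2))]
    _ ≤ L * dist u v / -β := hA.norm_perronIntegral_le hβ fun s _ => hdiff s
    _ = L / -β * dist u v := by ring

end FixedPoint

theorem existsUnique_bounded_perronIntegral_solution {E : Type*} [NormedAddCommGroup E]
    [NormedSpace ℝ E] [CompleteSpace E] {A : E →L[ℝ] E} {β C : ℝ} {g : E → ℝ → E} {L : ℝ≥0}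
    (hA : HasExpDecay A β) (hg : Continuous (Function.uncurry g))
    (hgL : ∀ s, LipschitzWith L (g · s)) (hβL : β + L < 0) (hC : ∀ s ≤ 0, ‖g 0 s‖ ≤ C) :
    ∃ y : ℝ → E,
      (ContinuousOn y (Iic 0) ∧ (∃ K : ℝ, ∀ t ≤ (0:ℝ), ‖y t‖ ≤ K) ∧
        ∀ t ≤ (0:ℝ), y t = perronIntegral A (fun s => g (y s) s) t) ∧
      (∀ t ≤ (0:ℝ), HasDerivWithinAt y (A (y t) + g (y t) t) (Iic 0) t) ∧
      ∀ z : ℝ → E,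
        (ContinuousOn z (Iic 0) ∧ (∃ K : ℝ, ∀ t ≤ (0:ℝ), ‖z t‖ ≤ K) ∧
          ∀ t ≤ (0:ℝ), z t = perronIntegral A (fun s => g (z s) s) t) →
        ∀ t ≤ (0:ℝ), z t = y t := by
  have hβ : β < 0 := by linarith [L.coe_nonneg]
  have hΦ : ContractingWith (Real.toNNReal (L / -β)) (perronMap hA hβ hg hgL hC) :=
    ⟨by rw [Real.toNNReal_lt_one, div_lt_one (neg_pos.2 hβ)]; linarith,
      lipschitzWith_perronMap hA hβ hg hgL hC⟩
  set Y := ContractingWith.fixedPoint _ hΦ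
  have hY := (isFixedPt_perronMap_iff hA hβ hg hgL hC Y).1 hΦ.fixedPoint_isFixedPt
  refine ⟨IicExtend Y, ⟨Y.continuous.IicExtend.continuousOn,
    ⟨‖Y‖, fun t _ => Y.norm_coe_le_norm _⟩, hY⟩, fun t ht => ?_, ?_⟩
  · have hd := hA.hasDerivWithinAt_perronIntegral hβ (continuous_apply_IicExtend hg Y)
      (fun _ => norm_apply_IicExtend_le hgL hC Y) ht
    rw [← hY t ht] at hd
    exact hd.congr hY (hY t ht)
  · rintro z ⟨hzc, ⟨K, hK⟩, hz⟩ t ht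
    obtain ⟨u, hu⟩ := hzc.exists_boundedContinuousFunction_eqOn hK
    have hfix : Function.IsFixedPt (perronMap hA hβ hg hgL hC) u :=
      (isFixedPt_perronMap_iff hA hβ hg hgL hC u).2 fun t ht => by
        rw [hu ht, hz t ht]
        exact perronIntegral_congr fun s hs => by rw [hu (mem_Iic.2 (hs.trans ht))]
    rw [← hu ht, hΦ.fixedPoint_unique hfix]

theorem frozen_fast_equation_existsUnique_general
    {n m : ℕ} (B : Euc m →L[ℝ] Euc m) (β : ℝ)
    (hB : ∀ t ≥ (0:ℝ), ∀ y : Euc m, ‖expOp B t y‖ ≤ Real.exp (β * t) * ‖y‖)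
    (G : Euc n → Euc m → ℝ → Euc m) (Lg : NNReal)
    (hGc : Continuous fun p : Euc n × Euc m × ℝ => G p.1 p.2.1 p.2.2)
    (hGl : ∀ t : ℝ, LipschitzWith Lg fun p : Euc n × Euc m => G p.1 p.2 t)
    (hβLg : β + (Lg : ℝ) < 0)
    (X : Euc n) (hGX : ∃ C : ℝ, ∀ t ≤ (0:ℝ), ‖G X 0 t‖ ≤ C) :
    ∃ Ybar : ℝ → Euc m,
      (ContinuousOn Ybar (Set.Iic 0) ∧
        (∃ K : ℝ, ∀ t ≤ (0:ℝ), ‖Ybar t‖ ≤ K) ∧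
        ∀ t ≤ (0:ℝ), Ybar t = ∫ s in Set.Iic t, expOp B (t - s) (G X (Ybar s) s)) ∧
      (∀ t ≤ (0:ℝ),
        HasDerivWithinAt Ybar (B (Ybar t) + G X (Ybar t) t) (Set.Iic 0) t) ∧
      ∀ Z : ℝ → Euc m,
        (ContinuousOn Z (Set.Iic 0) ∧
          (∃ K : ℝ, ∀ t ≤ (0:ℝ), ‖Z t‖ ≤ K) ∧
          ∀ t ≤ (0:ℝ), Z t = ∫ s in Set.Iic t, expOp B (t - s) (G X (Z s) s)) →
        ∀ t ≤ (0:ℝ), Z t = Ybar t := by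
  obtain ⟨C, hC⟩ := hGX
  have hgL : ∀ s, LipschitzWith Lg (G X · s) := fun s => by
    simpa only [mul_one, Function.comp_def] using (hGl s).comp (LipschitzWith.prodMk_left X)
  exact existsUnique_bounded_perronIntegral_solution (g := G X) hB
    (hGc.comp (continuous_const.prodMk continuous_id)) hgL hβLg hC

/-- For frozen slow variable `X`, if `β + L_g < 0` there is a unique bounded
continuous solution `Ȳ` on `(-∞,0]` of the integral equation
`Ȳ(t) = ∫_{-∞}^t e^{(t-s)B} G(X,Ȳ(s),s) ds`; it is continuously differentiable and solves
`Ȳ' = BȲ + G(X,Ȳ,t)`.  Its value `h⁰(X) = Ȳ(0)` defines the frozen-slow-variable graph map. -/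
theorem frozen_fast_equation_existsUnique
    {n m : ℕ} (B : Euc m →L[ℝ] Euc m) (β : ℝ) (hβ : β < 0)
    (hB : ∀ t ≥ (0:ℝ), ∀ y : Euc m, ‖expOp B t y‖ ≤ Real.exp (β * t) * ‖y‖)
    (G : Euc n → Euc m → ℝ → Euc m) (Lg : NNReal)
    (hGc : Continuous fun p : Euc n × Euc m × ℝ => G p.1 p.2.1 p.2.2)
    (hGl : ∀ t : ℝ, LipschitzWith Lg fun p : Euc n × Euc m => G p.1 p.2 t)
    (hβLg : β + (Lg : ℝ) < 0)
    (X : Euc n) (hGX : ∃ C : ℝ, ∀ t ≤ (0:ℝ), ‖G X 0 t‖ ≤ C) :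
    ∃ Ybar : ℝ → Euc m,
      (ContinuousOn Ybar (Set.Iic 0) ∧
        (∃ K : ℝ, ∀ t ≤ (0:ℝ), ‖Ybar t‖ ≤ K) ∧
        ∀ t ≤ (0:ℝ), Ybar t = ∫ s in Set.Iic t, expOp B (t - s) (G X (Ybar s) s)) ∧
      (∀ t ≤ (0:ℝ),
        HasDerivWithinAt Ybar (B (Ybar t) + G X (Ybar t) t) (Set.Iic 0) t) ∧
      ∀ Z : ℝ → Euc m,
        (ContinuousOn Z (Set.Iic 0) ∧
          (∃ K : ℝ, ∀ t ≤ (0:ℝ), ‖Z t‖ ≤ K) ∧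
          ∀ t ≤ (0:ℝ), Z t = ∫ s in Set.Iic t, expOp B (t - s) (G X (Z s) s)) →
        ∀ t ≤ (0:ℝ), Z t = Ybar t :=
  frozen_fast_equation_existsUnique_general B β hB G Lg hGc hGl hβLg X hGX
end
end
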